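/- The monoid U_n((-ℕ)_max) of unitriangular n×n tropical matrices with above-diagonal entries in (-ℕ) ∪ {-∞} is strongly permutable if and only if n ≤ 2; in particular U_3((-ℕ)_max) is not strongly permutable. -/

import Mathlib

set_option maxHeartbeats 1000000

universe u

/-! ### Semiring classes.

A *semiring* here is a nonempty set with an associative commutative addition and an
associative multiplication which distributes over addition on both sides; no zero or
identity element is assumed. -/

class PlainSemiring (S : Type u) extends Add S, Mul S where
  nonempty' : Nonempty S
  add_assoc' : ∀ a b c : S, a + b + c = a + (b + c)
  add_comm' : ∀ a b : S, a + b = b + a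
  mul_assoc' : ∀ a b c : S, a * b * c = a * (b * c)
  left_distrib' : ∀ a b c : S, a * (b + c) = a * b + a * c
  right_distrib' : ∀ a b c : S, (a + b) * c = a * c + b * c

/-- A bipotent semiring: `x + y` is always either `x` or `y`.
(The induced total order is given by `x ≤ y ↔ x + y = y`.) -/
class BipotentSemiring (S : Type u) extends PlainSemiring S where
  bipotent : ∀ a b : S, a + b = a ∨ a + b = b

/-- A commutative bipotent semiring. -/
class CommBipotentSemiring (S : Type u) extends BipotentSemiring S where
  mul_comm' : ∀ a b : S, a * b = b * a

/-- `mpow a n` is the `(n+1)`-st power of `a`, so the set of positive powers of `a`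
is exactly `Set.range (mpow a)`, and the multiplicative order of `a` is the
cardinality of `Set.range (mpow a)`. -/
def mpow {S : Type*} [Mul S] (a : S) : ℕ → S
  | 0 => a
  | n + 1 => mpow a n * a

lemma mpow_mul_mpow {S : Type*} [PlainSemiring S] (a : S) (m n : ℕ) :
    mpow a m * mpow a n = mpow a (m + n + 1) := by
  induction n with
  | zero => rfl
  | succ n ih =>
    show mpow a m * (mpow a n * a) = mpow a (m + n + 1) * a
    rw [← PlainSemiring.mul_assoc', ih]

/-! ### Products of finite families, and permutability. -/

/-- Fold step used to define sums/products of possibly empty families in a structure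
with no neutral element; the overall fold is `none` iff the family is empty. -/
def optStep {S : Type*} (op : S → S → S) : Option S → S → Option S :=
  fun acc x => some (acc.elim x (fun a => op a x))

/-- The sum `s 0 + s 1 + ⋯` of a finite family, as an `Option` (`none` iff `k = 0`). -/
def finSum {S : Type*} [Add S] {k : ℕ} (s : Fin k → S) : Option S :=
  (List.ofFn s).foldl (optStep (· + ·)) none

/-- The product `s 0 * s 1 * ⋯` of a finite family, as an `Option` (`none` iff `k = 0`). -/
def finProd {S : Type*} [Mul S] {k : ℕ} (s : Fin k → S) : Option S :=
  (List.ofFn s).foldl (optStep (· * ·)) none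

/-- A multiplicative structure is `k`-permutable if every product of `k` elements is
preserved by some non-identity permutation of its factors. -/
def KPermutable (S : Type*) [Mul S] (k : ℕ) : Prop :=
  ∀ s : Fin k → S, ∃ σ : Equiv.Perm (Fin k), σ ≠ Equiv.refl (Fin k) ∧
    finProd (fun i => s (σ i)) = finProd s

/-- A semigroup is strongly permutable if it is `k`-permutable for some `k ≥ 2`. -/
def StronglyPermutable (S : Type*) [Mul S] : Prop :=
  ∃ k : ℕ, 2 ≤ k ∧ KPermutable S k

/-- A semigroup is weakly permutable if for some `k ≥ 2`, any product of `k` elements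
is computed identically by two distinct permutations of its factors. -/
def WeaklyPermutable (S : Type*) [Mul S] : Prop :=
  ∃ k : ℕ, 2 ≤ k ∧ ∀ s : Fin k → S, ∃ σ τ : Equiv.Perm (Fin k), σ ≠ τ ∧
    finProd (fun i => s (σ i)) = finProd (fun i => s (τ i))

/-- Isomorphism of semirings (bijection preserving addition and multiplication). -/
def RingLikeIso (S T : Type*) [Add S] [Mul S] [Add T] [Mul T] : Prop :=
  ∃ f : S → T, Function.Bijective f ∧ (∀ a b : S, f (a + b) = f a + f b) ∧
    (∀ a b : S, f (a * b) = f a * f b)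

/-! ### Matrices. -/

/-- Square `n × n` matrices over `S`. -/
def MatSR (S : Type u) (n : ℕ) : Type u := Fin n → Fin n → S

/-- Matrix multiplication, `(A*B) i j = Σ_k (A i k * B k j)`.  (For `n ≥ 1` — the only
case of interest — the `getD` default value is never used.) -/
def matMul {S : Type*} [Add S] [Mul S] {n : ℕ} (A B : MatSR S n) : MatSR S n :=
  fun i j => (finSum (fun k : Fin n => A i k * B k j)).getD (A i j * B i j)

/-- The multiplicative semigroup `M_n(S)`. -/
instance {S : Type*} [Add S] [Mul S] {n : ℕ} : Mul (MatSR S n) := ⟨matMul⟩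

/-! ### `S⁰`: adjoining a zero, and upper triangular matrices. -/

/-- `S` with a zero (additively neutral, multiplicatively absorbing) element adjoined. -/
inductive Adj0 (S : Type u) : Type u
  | zero : Adj0 S
  | elem : S → Adj0 S

namespace Adj0

def add' {S : Type*} [Add S] : Adj0 S → Adj0 S → Adj0 S
  | .zero, b => b
  | .elem a, .zero => .elem a
  | .elem a, .elem b => .elem (a + b)

def mul' {S : Type*} [Mul S] : Adj0 S → Adj0 S → Adj0 S
  | .zero, _ => .zero
  | .elem _, .zero => .zero
  | .elem a, .elem b => .elem (a * b)

instance {S : Type*} [Add S] : Add (Adj0 S) := ⟨add'⟩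
instance {S : Type*} [Mul S] : Mul (Adj0 S) := ⟨mul'⟩

@[simp] lemma zero_add {S : Type*} [Add S] (b : Adj0 S) : (zero : Adj0 S) + b = b := rfl
@[simp] lemma add_zero {S : Type*} [Add S] (a : Adj0 S) : a + (zero : Adj0 S) = a := by
  cases a <;> rfl
@[simp] lemma elem_add_elem {S : Type*} [Add S] (a b : S) :
    (elem a : Adj0 S) + elem b = elem (a + b) := rfl
@[simp] lemma zero_mul {S : Type*} [Mul S] (b : Adj0 S) : (zero : Adj0 S) * b = zero := rfl
@[simp] lemma mul_zero {S : Type*} [Mul S] (a : Adj0 S) : a * (zero : Adj0 S) = zero := by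
  cases a <;> rfl
@[simp] lemma elem_mul_elem {S : Type*} [Mul S] (a b : S) :
    (elem a : Adj0 S) * elem b = elem (a * b) := rfl

lemma add_eq_zero_iff {S : Type*} [Add S] (a b : Adj0 S) :
    a + b = zero ↔ a = zero ∧ b = zero := by
  cases a <;> cases b <;> simp

end Adj0

lemma foldl_optStep_adj0 {S : Type*} [Add S] (l : List (Adj0 S)) (a : Adj0 S) :
    ∃ c : Adj0 S, l.foldl (optStep (· + ·)) (some a) = some c ∧
      (c = Adj0.zero ↔ a = Adj0.zero ∧ ∀ x ∈ l, x = Adj0.zero) := by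
  induction l generalizing a with
  | nil => exact ⟨a, rfl, by simp⟩
  | cons x l ih =>
    obtain ⟨c, hc, hiff⟩ := ih (a + x)
    refine ⟨c, ?_, ?_⟩
    · simpa [optStep] using hc
    · rw [hiff, Adj0.add_eq_zero_iff]
      simp only [List.mem_cons, forall_eq_or_imp]
      tauto

lemma finSum_adj0_eq_zero {S : Type*} [Add S] {n : ℕ} (f : Fin n → Adj0 S) (i : Fin n)
    (d : Adj0 S) (h : ∀ k, f k = Adj0.zero) : (finSum f).getD d = Adj0.zero := by
  cases n with
  | zero => exact i.elim0
  | succ m =>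
    rw [finSum, List.ofFn_succ, List.foldl_cons]
    obtain ⟨c, hc, hiff⟩ := foldl_optStep_adj0 (List.ofFn fun i : Fin m => f i.succ) (f 0)
    rw [show optStep (· + ·) none (f 0) = some (f 0) from rfl, hc]
    have : c = Adj0.zero := hiff.mpr ⟨h 0, by
      intro x hx
      rw [List.mem_ofFn] at hx
      obtain ⟨j, rfl⟩ := hx
      exact h _⟩
    simp [this]

lemma finSum_adj0_ne_zero {S : Type*} [Add S] {n : ℕ} (f : Fin n → Adj0 S) (i : Fin n)
    (d : Adj0 S) (h : f i ≠ Adj0.zero) : (finSum f).getD d ≠ Adj0.zero := by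
  cases n with
  | zero => exact i.elim0
  | succ m =>
    rw [finSum, List.ofFn_succ, List.foldl_cons]
    obtain ⟨c, hc, hiff⟩ := foldl_optStep_adj0 (List.ofFn fun i : Fin m => f i.succ) (f 0)
    rw [show optStep (· + ·) none (f 0) = some (f 0) from rfl, hc]
    simp only [Option.getD_some]
    intro hcz
    obtain ⟨h0, hall⟩ := hiff.mp hcz
    induction i using Fin.cases with
    | zero => exact h h0
    | succ j => exact h (hall _ (List.mem_ofFn.mpr ⟨j, rfl⟩))

/-- Upper-triangularity over `S⁰`: entries strictly below the diagonal are the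
adjoined zero; entries on and above the diagonal lie in `S`. -/
def IsUT {S : Type*} {n : ℕ} (A : MatSR (Adj0 S) n) : Prop :=
  (∀ i j : Fin n, (j : ℕ) < (i : ℕ) → A i j = Adj0.zero) ∧
  (∀ i j : Fin n, (i : ℕ) ≤ (j : ℕ) → ∃ s : S, A i j = Adj0.elem s)

lemma IsUT.mul {S : Type*} [Add S] [Mul S] {n : ℕ} {A B : MatSR (Adj0 S) n}
    (hA : IsUT A) (hB : IsUT B) : IsUT (matMul A B) := by
  constructor
  · intro i j hji
    apply finSum_adj0_eq_zero _ i
    intro k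
    rcases le_or_gt (i : ℕ) (k : ℕ) with h | h
    · rw [hB.1 k j (lt_of_lt_of_le hji h), Adj0.mul_zero]
    · rw [hA.1 i k h, Adj0.zero_mul]
  · intro i j hij
    have hne : matMul A B i j ≠ Adj0.zero := by
      apply finSum_adj0_ne_zero _ i
      obtain ⟨s, hs⟩ := hA.2 i i le_rfl
      obtain ⟨t, ht⟩ := hB.2 i j hij
      rw [hs, ht, Adj0.elem_mul_elem]
      simp
    cases hc : matMul A B i j with
    | zero => exact absurd hc hne
    | elem s => exact ⟨s, rfl⟩

/-- The multiplicative semigroup `UT_n(S)` of upper triangular matrices over `S⁰`. -/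
def UTMat (S : Type u) (n : ℕ) : Type u := {A : MatSR (Adj0 S) n // IsUT A}

instance {S : Type*} [Add S] [Mul S] {n : ℕ} : Mul (UTMat S n) :=
  ⟨fun A B => ⟨matMul A.1 B.1, A.2.mul B.2⟩⟩

/-! ### `S^{01}`: adjoining a zero and an identity, and unitriangular matrices. -/

/-- `S` with a zero and a multiplicative identity adjoined (`S^{01}` in the paper).
The sum of `one` and an `elem` is left undefined in the paper; it is given an
arbitrary value here, and never arises in products of unitriangular matrices. -/
inductive Adj01 (S : Type u) : Type u
  | zero : Adj01 S
  | one : Adj01 S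
  | elem : S → Adj01 S

namespace Adj01

def add' {S : Type*} [Add S] : Adj01 S → Adj01 S → Adj01 S
  | .zero, b => b
  | a, .zero => a
  | .one, .one => .one
  | .one, .elem b => .elem b
  | .elem a, .one => .elem a
  | .elem a, .elem b => .elem (a + b)

def mul' {S : Type*} [Mul S] : Adj01 S → Adj01 S → Adj01 S
  | .zero, _ => .zero
  | _, .zero => .zero
  | .one, b => b
  | a, .one => a
  | .elem a, .elem b => .elem (a * b)

instance {S : Type*} [Add S] : Add (Adj01 S) := ⟨add'⟩
instance {S : Type*} [Mul S] : Mul (Adj01 S) := ⟨mul'⟩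

@[simp] lemma zero_add {S : Type*} [Add S] (b : Adj01 S) : (zero : Adj01 S) + b = b := by
  cases b <;> rfl
@[simp] lemma add_zero {S : Type*} [Add S] (a : Adj01 S) : a + (zero : Adj01 S) = a := by
  cases a <;> rfl
@[simp] lemma one_add_one {S : Type*} [Add S] : (one : Adj01 S) + one = one := rfl
@[simp] lemma elem_add_elem {S : Type*} [Add S] (a b : S) :
    (elem a : Adj01 S) + elem b = elem (a + b) := rfl
@[simp] lemma one_add_elem {S : Type*} [Add S] (b : S) :
    (one : Adj01 S) + elem b = elem b := rfl
@[simp] lemma elem_add_one {S : Type*} [Add S] (a : S) :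
    (elem a : Adj01 S) + one = elem a := rfl
@[simp] lemma zero_mul {S : Type*} [Mul S] (b : Adj01 S) : (zero : Adj01 S) * b = zero := by
  cases b <;> rfl
@[simp] lemma mul_zero {S : Type*} [Mul S] (a : Adj01 S) : a * (zero : Adj01 S) = zero := by
  cases a <;> rfl
@[simp] lemma one_mul {S : Type*} [Mul S] (b : Adj01 S) : (one : Adj01 S) * b = b := by
  cases b <;> rfl
@[simp] lemma mul_one {S : Type*} [Mul S] (a : Adj01 S) : a * (one : Adj01 S) = a := by
  cases a <;> rfl
@[simp] lemma elem_mul_elem {S : Type*} [Mul S] (a b : S) :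
    (elem a : Adj01 S) * elem b = elem (a * b) := rfl

lemma mul_ne_one {S : Type*} [Mul S] {a b : Adj01 S} (ha : a ≠ one) (hb : b ≠ one) :
    a * b ≠ one := by
  cases a <;> cases b <;> simp_all

lemma add_ne_one {S : Type*} [Add S] {a b : Adj01 S} (ha : a ≠ one) (hb : b ≠ one) :
    a + b ≠ one := by
  cases a <;> cases b <;> simp_all

lemma add_01 {S : Type*} [Add S] {a b : Adj01 S} (ha : a = zero ∨ a = one)
    (hb : b = zero ∨ b = one) :
    (a + b = zero ∨ a + b = one) ∧ (a + b = one ↔ a = one ∨ b = one) := by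
  rcases ha with rfl | rfl <;> rcases hb with rfl | rfl <;> simp

end Adj01

lemma foldl_optStep_adj01 {S : Type*} [Add S] (l : List (Adj01 S)) (a : Adj01 S)
    (ha : a = Adj01.zero ∨ a = Adj01.one) (hl : ∀ x ∈ l, x = Adj01.zero ∨ x = Adj01.one) :
    ∃ c : Adj01 S, l.foldl (optStep (· + ·)) (some a) = some c ∧
      (c = Adj01.zero ∨ c = Adj01.one) ∧
      (c = Adj01.one ↔ a = Adj01.one ∨ ∃ x ∈ l, x = Adj01.one) := by
  induction l generalizing a with
  | nil => exact ⟨a, rfl, ha, by simp⟩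
  | cons x l ih =>
    have hx := hl x (by simp)
    have key := Adj01.add_01 ha hx
    obtain ⟨c, hc, hc01, hiff⟩ := ih (a + x) key.1 (fun y hy => hl y (by simp [hy]))
    refine ⟨c, by simpa [optStep] using hc, hc01, ?_⟩
    rw [hiff, key.2]
    simp only [List.mem_cons, exists_eq_or_imp]
    tauto

lemma foldl_optStep_adj01_ne_one {S : Type*} [Add S] (l : List (Adj01 S)) (a : Adj01 S)
    (ha : a ≠ Adj01.one) (hl : ∀ x ∈ l, x ≠ Adj01.one) :
    ∃ c : Adj01 S, l.foldl (optStep (· + ·)) (some a) = some c ∧ c ≠ Adj01.one := by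
  induction l generalizing a with
  | nil => exact ⟨a, rfl, ha⟩
  | cons x l ih =>
    have hax : a + x ≠ Adj01.one := Adj01.add_ne_one ha (hl x (by simp))
    obtain ⟨c, hc, hcne⟩ := ih (a + x) hax (fun y hy => hl y (by simp [hy]))
    exact ⟨c, by simpa [optStep] using hc, hcne⟩

lemma finSum_adj01_eq_one {S : Type*} [Add S] {n : ℕ} (f : Fin n → Adj01 S) (i : Fin n)
    (d : Adj01 S) (h01 : ∀ k, f k = Adj01.zero ∨ f k = Adj01.one) (hi : f i = Adj01.one) :
    (finSum f).getD d = Adj01.one := by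
  cases n with
  | zero => exact i.elim0
  | succ m =>
    rw [finSum, List.ofFn_succ, List.foldl_cons]
    obtain ⟨c, hc, _, hiff⟩ := foldl_optStep_adj01 (List.ofFn fun i : Fin m => f i.succ) (f 0)
      (h01 0) (by
        intro x hx
        rw [List.mem_ofFn] at hx
        obtain ⟨j, rfl⟩ := hx
        exact h01 _)
    rw [show optStep (· + ·) none (f 0) = some (f 0) from rfl, hc]
    simp only [Option.getD_some]
    apply hiff.mpr
    induction i using Fin.cases with
    | zero => exact Or.inl hi
    | succ j => exact Or.inr ⟨f j.succ, List.mem_ofFn.mpr ⟨j, rfl⟩, hi⟩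

lemma finSum_adj01_eq_zero {S : Type*} [Add S] {n : ℕ} (f : Fin n → Adj01 S) (i : Fin n)
    (d : Adj01 S) (h : ∀ k, f k = Adj01.zero) : (finSum f).getD d = Adj01.zero := by
  cases n with
  | zero => exact i.elim0
  | succ m =>
    rw [finSum, List.ofFn_succ, List.foldl_cons]
    obtain ⟨c, hc, hc01, hiff⟩ := foldl_optStep_adj01 (List.ofFn fun i : Fin m => f i.succ)
      (f 0) (Or.inl (h 0)) (by
        intro x hx
        rw [List.mem_ofFn] at hx
        obtain ⟨j, rfl⟩ := hx
        exact Or.inl (h _))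
    rw [show optStep (· + ·) none (f 0) = some (f 0) from rfl, hc]
    simp only [Option.getD_some]
    rcases hc01 with h' | h'
    · exact h'
    · exfalso
      rcases hiff.mp h' with h'' | ⟨x, hx, hx1⟩
      · rw [h 0] at h''; cases h''
      · rw [List.mem_ofFn] at hx
        obtain ⟨j, rfl⟩ := hx
        rw [h _] at hx1; cases hx1

lemma finSum_adj01_ne_one {S : Type*} [Add S] {n : ℕ} (f : Fin n → Adj01 S) (i : Fin n)
    (d : Adj01 S) (h : ∀ k, f k ≠ Adj01.one) : (finSum f).getD d ≠ Adj01.one := by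
  cases n with
  | zero => exact i.elim0
  | succ m =>
    rw [finSum, List.ofFn_succ, List.foldl_cons]
    obtain ⟨c, hc, hcne⟩ := foldl_optStep_adj01_ne_one (List.ofFn fun i : Fin m => f i.succ)
      (f 0) (h 0) (by
        intro x hx
        rw [List.mem_ofFn] at hx
        obtain ⟨j, rfl⟩ := hx
        exact h _)
    rw [show optStep (· + ·) none (f 0) = some (f 0) from rfl, hc]
    simpa using hcne

/-- Unitriangularity over `S^{01}`: the adjoined zero strictly below the diagonal, the
adjoined identity on the diagonal, and entries of `S⁰` (i.e. anything except the
adjoined identity) strictly above the diagonal. -/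
def IsU {S : Type*} {n : ℕ} (A : MatSR (Adj01 S) n) : Prop :=
  (∀ i j : Fin n, (j : ℕ) < (i : ℕ) → A i j = Adj01.zero) ∧
  (∀ i : Fin n, A i i = Adj01.one) ∧
  (∀ i j : Fin n, (i : ℕ) < (j : ℕ) → A i j ≠ Adj01.one)

lemma IsU.mul {S : Type*} [Add S] [Mul S] {n : ℕ} {A B : MatSR (Adj01 S) n}
    (hA : IsU A) (hB : IsU B) : IsU (matMul A B) := by
  refine ⟨?_, ?_, ?_⟩
  · intro i j hji
    apply finSum_adj01_eq_zero _ i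
    intro k
    rcases le_or_gt (i : ℕ) (k : ℕ) with h | h
    · rw [hB.1 k j (lt_of_lt_of_le hji h), Adj01.mul_zero]
    · rw [hA.1 i k h, Adj01.zero_mul]
  · intro i
    apply finSum_adj01_eq_one _ i
    · intro k
      rcases lt_trichotomy (k : ℕ) (i : ℕ) with h | h | h
      · rw [hA.1 i k h, Adj01.zero_mul]; exact Or.inl rfl
      · have : k = i := Fin.ext h
        subst this
        rw [hA.2.1 k, hB.2.1 k, Adj01.one_mul]; exact Or.inr rfl
      · rw [hB.1 k i h, Adj01.mul_zero]; exact Or.inl rfl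
    · rw [hA.2.1 i, hB.2.1 i, Adj01.one_mul]
  · intro i j hij
    apply finSum_adj01_ne_one _ i
    intro k
    rcases lt_trichotomy (k : ℕ) (i : ℕ) with h | h | h
    · rw [hA.1 i k h, Adj01.zero_mul]; exact fun h => by cases h
    · have : k = i := Fin.ext h
      subst this
      rw [hA.2.1 k, Adj01.one_mul]
      exact hB.2.2 k j (by omega)
    · rcases lt_trichotomy (k : ℕ) (j : ℕ) with h' | h' | h'
      · exact Adj01.mul_ne_one (hA.2.2 i k h) (hB.2.2 k j h')
      · have : k = j := Fin.ext h'
        subst this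
        rw [hB.2.1 k, Adj01.mul_one]
        exact hA.2.2 i k h
      · rw [hB.1 k j h', Adj01.mul_zero]; exact fun h => by cases h

/-- The multiplicative monoid `U_n(S)` of unitriangular matrices over `S^{01}`. -/
def UMat (S : Type u) (n : ℕ) : Type u := {A : MatSR (Adj01 S) n // IsU A}

instance {S : Type*} [Add S] [Mul S] {n : ℕ} : Mul (UMat S n) :=
  ⟨fun A B => ⟨matMul A.1 B.1, A.2.mul B.2⟩⟩

/-! ### Monogenic subsemirings. -/

/-- The carrier of the monogenic subsemiring `⟨a⟩` generated by `a` is the set of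
positive powers of `a`; in a bipotent semiring it is closed under addition. -/
instance genAdd {S : Type*} [BipotentSemiring S] (a : S) : Add ↥(Set.range (mpow a)) :=
  ⟨fun p q => ⟨p.1 + q.1, by
    rcases BipotentSemiring.bipotent p.1 q.1 with h | h <;> rw [h]
    exacts [p.2, q.2]⟩⟩

instance genMul {S : Type*} [BipotentSemiring S] (a : S) : Mul ↥(Set.range (mpow a)) :=
  ⟨fun p q => ⟨p.1 * q.1, by
    obtain ⟨m, hm⟩ := p.2
    obtain ⟨n, hn⟩ := q.2
    exact ⟨m + n + 1, by rw [← hm, ← hn, mpow_mul_mpow]⟩⟩⟩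

/-! ### Concrete bipotent semirings. -/

/-- The tropical semiring `ℕ_max` of positive natural numbers: addition is `max`,
multiplication is ordinary addition. -/
def NMax : Type := {n : ℕ // 0 < n}

instance : Add NMax := ⟨fun a b => ⟨max a.1 b.1, by have := a.2; have := b.2; omega⟩⟩
instance : Mul NMax := ⟨fun a b => ⟨a.1 + b.1, by have := a.2; have := b.2; omega⟩⟩

/-- The tropical semiring `(-ℕ)_max` of negative integers: addition is `max`,
multiplication is ordinary addition. -/
def NegNMax : Type := {z : ℤ // z < 0}

instance : Add NegNMax := ⟨fun a b => ⟨max a.1 b.1, by have := a.2; have := b.2; omega⟩⟩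
instance : Mul NegNMax := ⟨fun a b => ⟨a.1 + b.1, by have := a.2; have := b.2; omega⟩⟩

/-- The truncated tropical semiring `[k]_max` on `{1,…,k}`: addition is `max`,
multiplication is `a·b = min (a+b) k`. -/
def KMax (k : ℕ) : Type := {n : ℕ // 0 < n ∧ n ≤ k}

instance {k : ℕ} : Add (KMax k) :=
  ⟨fun a b => ⟨max a.1 b.1, by have := a.2; have := b.2; omega⟩⟩
instance {k : ℕ} : Mul (KMax k) :=
  ⟨fun a b => ⟨min (a.1 + b.1) k, by have := a.2; have := b.2; omega⟩⟩

/-- The truncated tropical semiring `[-k]_max` on `{-k,…,-1}`: addition is `max`,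
multiplication is `a·b = max (a+b) (-k)`. -/
def NegKMax (k : ℕ) : Type := {z : ℤ // -(k : ℤ) ≤ z ∧ z ≤ -1}

instance {k : ℕ} : Add (NegKMax k) :=
  ⟨fun a b => ⟨max a.1 b.1, by have := a.2; have := b.2; omega⟩⟩
instance {k : ℕ} : Mul (NegKMax k) :=
  ⟨fun a b => ⟨max (a.1 + b.1) (-(k : ℤ)), by have := a.2; have := b.2; omega⟩⟩

/-- The two-element boolean semifield `𝔹`: `{0,1}` with `0 < 1`, addition `max` (= "or")
and the usual multiplication (= "and"). -/
def BoolSR : Type := Bool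

instance : Add BoolSR := ⟨fun a b => (Bool.or a b : Bool)⟩
instance : Mul BoolSR := ⟨fun a b => (Bool.and a b : Bool)⟩

/-- A chain semiring: a linearly ordered set with addition `max` and multiplication `min`. -/
def ChainSR (L : Type u) [LinearOrder L] : Type u := L

instance {L : Type u} [LinearOrder L] : Add (ChainSR L) := ⟨fun a b => (max a b : L)⟩
instance {L : Type u} [LinearOrder L] : Mul (ChainSR L) := ⟨fun a b => (min a b : L)⟩

/-- The three-element commutative bipotent semiring of Proposition 1: order `A < B < C`
(addition is `max`), every element multiplicatively idempotent, and all products of two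
distinct elements equal to `B`. -/
inductive Three : Type
  | A : Three
  | B : Three
  | C : Three
deriving DecidableEq

instance instFintypeThree : Fintype Three :=
  Fintype.ofList [Three.A, Three.B, Three.C] (fun x => by cases x <;> simp)

def Three.add' : Three → Three → Three
  | .A, y => y
  | x, .A => x
  | .B, y => y
  | x, .B => x
  | .C, .C => .C

def Three.mul' : Three → Three → Three
  | .A, .A => .A
  | .B, .B => .B
  | .C, .C => .C
  | _, _ => .B

instance : Add Three := ⟨Three.add'⟩
instance : Mul Three := ⟨Three.mul'⟩

instance : CommBipotentSemiring Three where
  nonempty' := ⟨Three.A⟩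
  add_assoc' := by decide
  add_comm' := by decide
  mul_assoc' := by decide
  left_distrib' := by decide
  right_distrib' := by decide
  bipotent := by decide
  mul_comm' := by decide

/-- A bundled (possibly zero-less and identity-less) semiring, used to quantify over
semirings inside hypotheses. -/
structure BundledSemiring : Type 1 where
  carrier : Type
  add : carrier → carrier → carrier
  mul : carrier → carrier → carrier
  nonempty' : Nonempty carrier
  add_assoc' : ∀ a b c, add (add a b) c = add a (add b c)
  add_comm' : ∀ a b, add a b = add b a
  mul_assoc' : ∀ a b c, mul (mul a b) c = mul a (mul b c)
  left_distrib' : ∀ a b c, mul a (add b c) = add (mul a b) (mul a c)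
  right_distrib' : ∀ a b c, mul (add a b) c = add (mul a c) (mul b c)

/-! ### Semifields. -/

/-- `z` is a zero element: additively neutral and multiplicatively absorbing. -/
def IsZeroElem {S : Type*} [Add S] [Mul S] (z : S) : Prop :=
  ∀ x : S, z + x = x ∧ x + z = x ∧ z * x = z ∧ x * z = z

/-- `S` is a semifield: a commutative semiring, possibly without zero, whose set of
non-zero elements forms a group under multiplication (with identity `e`). -/
def IsSemifield (S : Type*) [Add S] [Mul S] : Prop :=
  ∃ e : S, ¬ IsZeroElem e ∧
    (∀ x : S, ¬ IsZeroElem x → e * x = x ∧ x * e = x) ∧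
    (∀ x y : S, ¬ IsZeroElem x → ¬ IsZeroElem y → ¬ IsZeroElem (x * y)) ∧
    (∀ x : S, ¬ IsZeroElem x → ∃ y : S, ¬ IsZeroElem y ∧ x * y = e ∧ y * x = e)

/-! ### Truncated tropical semirings. -/

/-- The underlying set `[x,y] ∪ {0}` of the truncated tropical semiring `𝕋_{[x,y]}`
(without the zero element `-∞`), for `0 ≤ x`.  Addition is `max`; multiplication is
`y`-truncated addition `a ⊗ b = min (a+b) y`, with the element `0` acting as the
multiplicative identity. -/
def TTb (x y : ℝ) (_hx : 0 ≤ x) : Type := {r : ℝ // r = 0 ∨ (x ≤ r ∧ r ≤ y)}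

namespace TTb

protected def add {x y : ℝ} {hx : 0 ≤ x} (a b : TTb x y hx) : TTb x y hx :=
  ⟨max a.1 b.1, by rcases max_choice a.1 b.1 with h | h <;> rw [h]
                   exacts [a.2, b.2]⟩

protected noncomputable def mul {x y : ℝ} {hx : 0 ≤ x} (a b : TTb x y hx) : TTb x y hx :=
  if ha : a.1 = 0 then b else if hb : b.1 = 0 then a else
    ⟨min (a.1 + b.1) y, by
      rcases a.2 with h | h
      · exact absurd h ha
      rcases b.2 with h' | h'
      · exact absurd h' hb
      right
      exact ⟨le_min (by linarith [h.1, h'.1]) (by linarith [h.1, h.2]), min_le_right _ _⟩⟩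

instance {x y : ℝ} {hx : 0 ≤ x} : Add (TTb x y hx) := ⟨TTb.add⟩
noncomputable instance {x y : ℝ} {hx : 0 ≤ x} : Mul (TTb x y hx) := ⟨TTb.mul⟩

end TTb

/-- The truncated tropical semiring `𝕋_{[x,y]}` (for `0 ≤ x < y`): the real interval
`[x,y]` together with a multiplicative identity `0` and a zero `-∞`, with addition
`max` and multiplication the `y`-truncated addition `a ⊗ b = min (a+b) y`. -/
abbrev TT (x y : ℝ) (hx : 0 ≤ x) : Type := Adj0 (TTb x y hx)

/-- The multiplicative identity `0` of `𝕋_{[x,y]}`. -/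
noncomputable def ttId (x y : ℝ) (hx : 0 ≤ x) : TT x y hx := Adj0.elem ⟨0, Or.inl rfl⟩

lemma ttId_mul {x y : ℝ} {hx : 0 ≤ x} (b : TT x y hx) : ttId x y hx * b = b := by
  cases b with
  | zero => rfl
  | elem e =>
    show Adj0.elem (TTb.mul ⟨0, Or.inl rfl⟩ e) = Adj0.elem e
    delta TTb.mul; exact congrArg Adj0.elem (dif_pos rfl)

/-- The subsemigroup `S` of `M_2(𝕋_{[1,z]})` of matrices of the form `[[0,a],[-∞,b]]`. -/
noncomputable def UpperS (z : ℝ) (hz : (0:ℝ) ≤ 1) : Type :=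
  {A : MatSR (TT 1 z hz) 2 // A 0 0 = ttId 1 z hz ∧ A 1 0 = Adj0.zero}

/-- The subsemigroup `S'` of `M_2(𝕋_{[1,z]})` of matrices of the form `[[0,-∞],[a,b]]`. -/
noncomputable def LowerS (z : ℝ) (hz : (0:ℝ) ≤ 1) : Type :=
  {A : MatSR (TT 1 z hz) 2 // A 0 0 = ttId 1 z hz ∧ A 0 1 = Adj0.zero}

noncomputable instance {z : ℝ} {hz : (0:ℝ) ≤ 1} : Mul (UpperS z hz) :=
  ⟨fun A B => ⟨A.1 * B.1, by
    obtain ⟨hA1, hA2⟩ := A.2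
    obtain ⟨hB1, hB2⟩ := B.2
    constructor
    · show A.1 0 0 * B.1 0 0 + A.1 0 1 * B.1 1 0 = ttId 1 z hz
      rw [hA1, hB1, hB2, ttId_mul, Adj0.mul_zero, Adj0.add_zero]
    · show A.1 1 0 * B.1 0 0 + A.1 1 1 * B.1 1 0 = Adj0.zero
      rw [hA2, hB2, Adj0.zero_mul, Adj0.mul_zero, Adj0.add_zero]⟩⟩

noncomputable instance {z : ℝ} {hz : (0:ℝ) ≤ 1} : Mul (LowerS z hz) :=
  ⟨fun A B => ⟨A.1 * B.1, by
    obtain ⟨hA1, hA2⟩ := A.2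
    obtain ⟨hB1, hB2⟩ := B.2
    constructor
    · show A.1 0 0 * B.1 0 0 + A.1 0 1 * B.1 1 0 = ttId 1 z hz
      rw [hA1, hB1, hA2, ttId_mul, Adj0.zero_mul, Adj0.add_zero]
    · show A.1 0 0 * B.1 0 1 + A.1 0 1 * B.1 1 1 = Adj0.zero
      rw [hA1, hB2, hA2, ttId_mul, Adj0.zero_mul, Adj0.add_zero]⟩⟩

/-! ### Auxiliary development for `stmt_7`. -/

section Stmt7Aux

lemma foldl_optStep_some {T : Type*} (op : T → T → T) (l : List T) (a : T) :
    l.foldl (optStep op) (some a) = some (l.foldl op a) := by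
  induction l generalizing a with
  | nil => rfl
  | cons x l ih => simpa [optStep] using ih (op a x)

lemma finProd_succ {T : Type*} [Mul T] {k : ℕ} (s : Fin (k+1) → T) :
    finProd s = some ((List.ofFn fun i : Fin k => s i.succ).foldl (· * ·) (s 0)) := by
  rw [finProd, List.ofFn_succ, List.foldl_cons]
  exact foldl_optStep_some _ _ _

lemma finProd_two {T : Type*} [Mul T] (s : Fin 2 → T) : finProd s = some (s 0 * s 1) := by
  rw [finProd_succ]
  simp [List.ofFn_succ]

lemma sp_of_comm {T : Type*} [Mul T] (h : ∀ a b : T, a * b = b * a) :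
    StronglyPermutable T := by
  refine ⟨2, le_rfl, fun s => ⟨Equiv.swap 0 1, ?_, ?_⟩⟩
  · intro hcon
    have h0 : Equiv.swap (0 : Fin 2) 1 0 = 0 := by rw [hcon]; rfl
    rw [Equiv.swap_apply_left] at h0
    exact absurd h0 (by decide)
  · rw [finProd_two, finProd_two]
    simp only [Equiv.swap_apply_left, Equiv.swap_apply_right]
    rw [h (s 1) (s 0)]

end Stmt7Aux

section Stmt7Small

lemma umat1_subsingleton (A B : UMat NegNMax 1) : A = B := by
  apply Subtype.ext
  funext i j
  have hij : i = j := Subsingleton.elim i j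
  subst hij
  rw [A.2.2.1 i, B.2.2.1 i]

lemma sp_one : StronglyPermutable (UMat NegNMax 1) :=
  sp_of_comm fun a b => by rw [umat1_subsingleton a b]

lemma negNMax_add_comm (a b : NegNMax) : a + b = b + a :=
  Subtype.ext (max_comm _ _)

lemma adj01_negN_add_comm (a b : Adj01 NegNMax) : a + b = b + a := by
  cases a <;> cases b <;> simp [negNMax_add_comm]

lemma finSum_two' {S : Type*} [Add S] (f : Fin 2 → S) (d : S) :
    (finSum f).getD d = f 0 + f 1 := by
  rw [finSum]
  simp [List.ofFn_succ, optStep]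

lemma umat2_comm (A B : UMat NegNMax 2) : A * B = B * A := by
  have hA10 : A.1 1 0 = Adj01.zero := A.2.1 1 0 (by decide)
  have hB10 : B.1 1 0 = Adj01.zero := B.2.1 1 0 (by decide)
  have hA00 : A.1 0 0 = Adj01.one := A.2.2.1 0
  have hA11 : A.1 1 1 = Adj01.one := A.2.2.1 1
  have hB00 : B.1 0 0 = Adj01.one := B.2.2.1 0
  have hB11 : B.1 1 1 = Adj01.one := B.2.2.1 1
  apply Subtype.ext
  funext i j
  show matMul A.1 B.1 i j = matMul B.1 A.1 i j
  show (finSum fun p => A.1 i p * B.1 p j).getD _ =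
    (finSum fun p => B.1 i p * A.1 p j).getD _
  rw [finSum_two', finSum_two']
  fin_cases i <;> fin_cases j <;>
    simp only [Fin.mk_zero, Fin.mk_one, hA10, hB10, hA00, hA11, hB00, hB11,
      Adj01.one_mul, Adj01.mul_one, Adj01.zero_mul, Adj01.mul_zero,
      Adj01.zero_add, Adj01.add_zero]
  exact adj01_negN_add_comm _ _

lemma sp_two : StronglyPermutable (UMat NegNMax 2) :=
  sp_of_comm umat2_comm

end Stmt7Small

namespace Stmt7Big

/-- Embedding of a (would-be negative) integer into `Adj01 NegNMax`. -/
def eZ (a : ℤ) : Adj01 NegNMax :=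
  if h : a < 0 then Adj01.elem ⟨a, h⟩ else Adj01.zero

lemma eZ_add {a b : ℤ} (ha : a < 0) (hb : b < 0) : eZ a + eZ b = eZ (max a b) := by
  rw [eZ, eZ, eZ, dif_pos ha, dif_pos hb, dif_pos (by omega : max a b < 0)]
  rfl

lemma eZ_mul {a b : ℤ} (ha : a < 0) (hb : b < 0) : eZ a * eZ b = eZ (a + b) := by
  rw [eZ, eZ, eZ, dif_pos ha, dif_pos hb, dif_pos (by omega : a + b < 0)]
  rfl

lemma eZ_ne_one (a : ℤ) : eZ a ≠ Adj01.one := by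
  rw [eZ]; split <;> simp

lemma eZ_inj {a b : ℤ} (ha : a < 0) (hb : b < 0) (h : eZ a = eZ b) : a = b := by
  rw [eZ, eZ, dif_pos ha, dif_pos hb] at h
  have := congrArg (fun x => match x with
    | Adj01.elem s => s.1
    | _ => 0) h
  simpa using this

/-- The value of the `(0,2)` entry given the optional state entry. -/
def cE : Option ℤ → Adj01 NegNMax
  | none => Adj01.zero
  | some v => eZ v

variable {m k : ℕ}

def f0 (m : ℕ) : Fin (m+3) := ⟨0, by omega⟩
def f1 (m : ℕ) : Fin (m+3) := ⟨1, by omega⟩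
def f2 (m : ℕ) : Fin (m+3) := ⟨2, by omega⟩

/-- The generating matrices. -/
def Mt (m k : ℕ) (t : Fin k) : MatSR (Adj01 NegNMax) (m+3) := fun i j =>
  if (i : ℕ) = (j : ℕ) then Adj01.one
  else if (i : ℕ) = 0 ∧ (j : ℕ) = 1 then eZ ((t : ℤ) - k)
  else if (i : ℕ) = 1 ∧ (j : ℕ) = 2 then eZ (-(t : ℤ) - 1)
  else Adj01.zero

lemma Mt_eval_zero (t : Fin k) {i j : Fin (m+3)} (h1 : ¬ (i : ℕ) = (j : ℕ))
    (h2 : ¬ ((i : ℕ) = 0 ∧ (j : ℕ) = 1)) (h3 : ¬ ((i : ℕ) = 1 ∧ (j : ℕ) = 2)) :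
    Mt m k t i j = Adj01.zero := by
  rw [Mt, if_neg h1, if_neg h2, if_neg h3]

lemma Mt_diag (t : Fin k) {i j : Fin (m+3)} (h : (i : ℕ) = (j : ℕ)) :
    Mt m k t i j = Adj01.one := by
  rw [Mt, if_pos h]

lemma Mt_01 (t : Fin k) : Mt m k t (f0 m) (f1 m) = eZ ((t : ℤ) - k) := by
  rw [Mt, if_neg (by simp [f0, f1]), if_pos (by simp [f0, f1])]

lemma Mt_12 (t : Fin k) : Mt m k t (f1 m) (f2 m) = eZ (-(t : ℤ) - 1) := by
  rw [Mt, if_neg (by simp [f1, f2]), if_neg (by simp [f1, f2]), if_pos (by simp [f1, f2])]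

lemma Mt_02 (t : Fin k) : Mt m k t (f0 m) (f2 m) = Adj01.zero :=
  Mt_eval_zero t (by simp [f0, f2]) (by simp [f0, f2]) (by simp [f0, f2])

lemma isU_Mt (t : Fin k) : IsU (Mt m k t) := by
  refine ⟨?_, ?_, ?_⟩
  · intro i j hji
    exact Mt_eval_zero t (by omega) (by omega) (by omega)
  · intro i
    exact Mt_diag t rfl
  · intro i j hij
    rw [Mt]
    split
    · omega
    split
    · exact eZ_ne_one _
    split
    · exact eZ_ne_one _
    · simp

/-- The generating matrices as elements of the monoid. -/
def MU (m k : ℕ) (t : Fin k) : UMat NegNMax (m+3) := ⟨Mt m k t, isU_Mt t⟩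

/-- Special positions. -/
def Sp (i j : ℕ) : Prop := (i = 0 ∧ j = 1) ∨ (i = 1 ∧ j = 2) ∨ (i = 0 ∧ j = 2)

def Sparse (A : MatSR (Adj01 NegNMax) (m+3)) : Prop :=
  ∀ i j : Fin (m+3), (i : ℕ) < (j : ℕ) → ¬ Sp (i : ℕ) (j : ℕ) → A i j = Adj01.zero

/-- The abstract state: `(a, b, c)` = entries `(0,1)`, `(1,2)`, `(0,2)`. -/
def Rep (st : ℤ × ℤ × Option ℤ) (A : UMat NegNMax (m+3)) : Prop :=
  Sparse A.1 ∧ A.1 (f0 m) (f1 m) = eZ st.1 ∧ A.1 (f1 m) (f2 m) = eZ st.2.1 ∧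
    A.1 (f0 m) (f2 m) = cE st.2.2

def GoodSt (st : ℤ × ℤ × Option ℤ) : Prop :=
  st.1 < 0 ∧ st.2.1 < 0 ∧ ∀ v ∈ st.2.2, v < 0

def stepSt (k : ℕ) (st : ℤ × ℤ × Option ℤ) (t : Fin k) : ℤ × ℤ × Option ℤ :=
  (max st.1 ((t : ℤ) - k), max st.2.1 (-(t : ℤ) - 1),
    some (match st.2.2 with
      | none => st.1 + (-(t : ℤ) - 1)
      | some v => max v (st.1 + (-(t : ℤ) - 1))))

lemma rep_MU (t : Fin k) : Rep (((t : ℤ) - k, -(t : ℤ) - 1, none)) (MU m k t) := by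
  refine ⟨?_, Mt_01 (m := m) t, Mt_12 (m := m) t, Mt_02 (m := m) t⟩
  intro i j hij hsp
  refine Mt_eval_zero t (by omega) ?_ ?_ <;>
    · intro hc
      apply hsp
      rw [Sp]
      tauto

lemma good_MU (t : Fin k) : GoodSt (((t : ℤ) - k, -(t : ℤ) - 1, none)) := by
  have := t.isLt
  refine ⟨show (t : ℤ) - k < 0 by omega, show -(t : ℤ) - 1 < 0 by omega, by
    intro v hv; simp at hv⟩

end Stmt7Big

namespace Stmt7Big

variable {m k : ℕ}

lemma foldl_optStep_zero {S : Type*} [Add S] (l : List (Adj01 S)) (a : Adj01 S)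
    (h : ∀ x ∈ l, x = Adj01.zero) : l.foldl (optStep (· + ·)) (some a) = some a := by
  induction l generalizing a with
  | nil => rfl
  | cons x l ih =>
    have hx := h x (by simp)
    subst hx
    rw [List.foldl_cons]
    show List.foldl _ (some (a + Adj01.zero)) l = some a
    rw [Adj01.add_zero]
    exact ih a fun y hy => h y (by simp [hy])

lemma finSum_first3 {S : Type*} [Add S] (f : Fin (m+3) → Adj01 S) (d : Adj01 S)
    (h : ∀ p : Fin (m+3), 3 ≤ (p : ℕ) → f p = Adj01.zero) :
    (finSum f).getD d = f (f0 m) + f (f1 m) + f (f2 m) := by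
  rw [finSum, List.ofFn_succ, List.ofFn_succ, List.ofFn_succ, List.foldl_cons,
    List.foldl_cons, List.foldl_cons]
  have hz : ∀ x ∈ List.ofFn (fun i : Fin m => f i.succ.succ.succ), x = Adj01.zero := by
    intro x hx
    rw [List.mem_ofFn] at hx
    obtain ⟨i, rfl⟩ := hx
    exact h _ (by simp [Fin.val_succ])
  show ((List.ofFn _).foldl (optStep (· + ·))
    (some ((f 0 + f (0 : Fin (m+2)).succ) + f ((0 : Fin (m+1)).succ.succ)))).getD d = _
  rw [foldl_optStep_zero _ _ hz]
  have e0 : (0 : Fin (m+3)) = f0 m := by simp [f0, Fin.ext_iff]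
  have e1 : ((0 : Fin (m+2)).succ : Fin (m+3)) = f1 m := by simp [f1, Fin.ext_iff]
  have e2 : (((0 : Fin (m+1)).succ.succ : Fin (m+3))) = f2 m := by simp [f2, Fin.ext_iff]
  rw [e0, e1, e2]
  rfl

end Stmt7Big

namespace Stmt7Big

variable {m k : ℕ}

lemma rep_mul {A : UMat NegNMax (m+3)} {st : ℤ × ℤ × Option ℤ}
    (hA : Rep st A) (hg : GoodSt st) (t : Fin k) :
    Rep (stepSt k st t) (A * MU m k t) ∧ GoodSt (stepSt k st t) := by
  obtain ⟨hSp, h01, h12, h02⟩ := hA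
  obtain ⟨ha, hb, hc⟩ := hg
  have htk : (t : ℤ) - k < 0 := by have := t.isLt; omega
  have htb : -(t : ℤ) - 1 < 0 := by omega
  have hAlow := A.2.1
  have hAdiag := A.2.2.1
  constructor
  · refine ⟨?_, ?_, ?_, ?_⟩
    · -- sparsity of the product
      intro i j hij hsp
      show (finSum fun p => A.1 i p * Mt m k t p j).getD _ = _
      apply finSum_adj01_eq_zero _ i
      intro p
      rcases lt_trichotomy (p : ℕ) (i : ℕ) with h | h | h
      · rw [hAlow i p h, Adj01.zero_mul]
      · have hpi : p = i := Fin.ext h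
        subst hpi
        rw [hAdiag p, Adj01.one_mul]
        refine Mt_eval_zero t (by omega) ?_ ?_ <;>
          · intro hcc; apply hsp; rw [Sp]; tauto
      · rcases lt_trichotomy (p : ℕ) (j : ℕ) with h2 | h2 | h2
        · by_cases hip : Sp (i : ℕ) (p : ℕ)
          · have hMz : Mt m k t p j = Adj01.zero := by
              refine Mt_eval_zero t (by omega) (by omega) ?_
              rw [Sp] at hip hsp
              omega
            rw [hMz, Adj01.mul_zero]
          · rw [hSp i p h hip, Adj01.zero_mul]
        · have hpj : p = j := Fin.ext h2
          subst hpj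
          rw [Mt_diag t rfl, Adj01.mul_one]
          exact hSp i p hij hsp
        · rw [Mt_eval_zero t (by omega) (by omega) (by omega), Adj01.mul_zero]
    · -- entry (0,1)
      show (finSum fun p => A.1 (f0 m) p * Mt m k t p (f1 m)).getD _ = _
      rw [finSum_first3 _ _ (fun (p : Fin (m+3)) (hp : 3 ≤ (p : ℕ)) => by
        rw [Mt_eval_zero t (by simp [f0, f1, f2] <;> omega) (by rintro ⟨h1, -⟩; omega)
          (by simp [f0, f1, f2] <;> omega), Adj01.mul_zero])]
      rw [hAdiag (f0 m), Adj01.one_mul, Mt_01 (m := m) t,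
        Mt_diag t (by simp [f1]), Adj01.mul_one, h01,
        Mt_eval_zero t (by simp [f1, f2]) (by simp [f1, f2]) (by simp [f1, f2]),
        Adj01.mul_zero, Adj01.add_zero, eZ_add htk ha]
      show eZ (max ((t : ℤ) - k) st.1) = eZ (max st.1 ((t : ℤ) - k))
      rw [max_comm]
    · -- entry (1,2)
      show (finSum fun p => A.1 (f1 m) p * Mt m k t p (f2 m)).getD _ = _
      rw [finSum_first3 _ _ (fun (p : Fin (m+3)) (hp : 3 ≤ (p : ℕ)) => by
        rw [Mt_eval_zero t (by simp [f0, f1, f2] <;> omega) (by rintro ⟨h1, -⟩; omega)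
          (by simp [f0, f1, f2] <;> omega), Adj01.mul_zero])]
      rw [hAlow (f1 m) (f0 m) (by simp [f0, f1]), Adj01.zero_mul, Adj01.zero_add,
        hAdiag (f1 m), Adj01.one_mul, Mt_12 (m := m) t,
        Mt_diag t (by simp [f2]), Adj01.mul_one, h12, eZ_add htb hb]
      show eZ (max (-(t : ℤ) - 1) st.2.1) = eZ (max st.2.1 (-(t : ℤ) - 1))
      rw [max_comm]
    · -- entry (0,2)
      show (finSum fun p => A.1 (f0 m) p * Mt m k t p (f2 m)).getD _ = _
      rw [finSum_first3 _ _ (fun (p : Fin (m+3)) (hp : 3 ≤ (p : ℕ)) => by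
        rw [Mt_eval_zero t (by simp [f0, f1, f2] <;> omega) (by rintro ⟨h1, -⟩; omega)
          (by simp [f0, f1, f2] <;> omega), Adj01.mul_zero])]
      rw [hAdiag (f0 m), Adj01.one_mul, Mt_02 (m := m) t, Adj01.zero_add,
        h01, Mt_12 (m := m) t, eZ_mul ha htb,
        Mt_diag t (by simp [f2]), Adj01.mul_one, h02]
      have hstep : (stepSt k st t).2.2 = some (match st.2.2 with
          | none => st.1 + (-(t : ℤ) - 1)
          | some v => max v (st.1 + (-(t : ℤ) - 1))) := rfl
      rw [hstep]
      cases hcc : st.2.2 with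
      | none =>
        show eZ (st.1 + (-(t : ℤ) - 1)) + cE none = cE (some (st.1 + (-(t : ℤ) - 1)))
        rw [cE, cE, Adj01.add_zero]
      | some v =>
        have hv : v < 0 := hc v (by rw [hcc]; rfl)
        show eZ (st.1 + (-(t : ℤ) - 1)) + cE (some v)
          = cE (some (max v (st.1 + (-(t : ℤ) - 1))))
        rw [cE, cE, eZ_add (by omega) hv, max_comm]
  · refine ⟨show max st.1 ((t : ℤ) - k) < 0 by omega,
      show max st.2.1 (-(t : ℤ) - 1) < 0 by omega, ?_⟩
    intro v hv
    have hstep : (stepSt k st t).2.2 = some (match st.2.2 with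
        | none => st.1 + (-(t : ℤ) - 1)
        | some w => max w (st.1 + (-(t : ℤ) - 1))) := rfl
    rw [hstep, Option.mem_def, Option.some.injEq] at hv
    cases hcc : st.2.2 with
    | none =>
      rw [hcc] at hv
      have hv' : st.1 + (-(t : ℤ) - 1) = v := hv
      omega
    | some w =>
      have hw : w < 0 := hc w (by rw [hcc]; rfl)
      rw [hcc] at hv
      have hv' : max w (st.1 + (-(t : ℤ) - 1)) = v := hv
      have hlt : max w (st.1 + (-(t : ℤ) - 1)) < 0 := max_lt hw (by omega)
      omega

end Stmt7Big

namespace Stmt7Big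

variable {m k : ℕ}

def mulM (m k : ℕ) (P : UMat NegNMax (m+3)) (t : Fin k) : UMat NegNMax (m+3) :=
  P * MU m k t

lemma fold_rep (L : List (Fin k)) :
    ∀ (A : UMat NegNMax (m+3)) (st : ℤ × ℤ × Option ℤ), Rep st A → GoodSt st →
      Rep (L.foldl (stepSt k) st) (L.foldl (mulM m k) A) ∧
        GoodSt (L.foldl (stepSt k) st) := by
  induction L with
  | nil => exact fun A st h hg => ⟨h, hg⟩
  | cons t L ih =>
    intro A st h hg
    obtain ⟨h', hg'⟩ := rep_mul h hg t
    exact ih _ _ h' hg'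

lemma fold_a_le (L : List (Fin k)) : ∀ st : ℤ × ℤ × Option ℤ,
    st.1 ≤ (L.foldl (stepSt k) st).1 := by
  induction L with
  | nil => exact fun _ => le_rfl
  | cons t L ih =>
    intro st
    exact le_trans (le_max_left _ _) (ih (stepSt k st t))

lemma fold_a_mem (L : List (Fin k)) (t : Fin k) (ht : t ∈ L) :
    ∀ st : ℤ × ℤ × Option ℤ, (t : ℤ) - k ≤ (L.foldl (stepSt k) st).1 := by
  induction L with
  | nil => simp at ht
  | cons x L ih =>
    intro st
    rcases List.mem_cons.mp ht with rfl | hmem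
    · exact le_trans (le_max_right _ _) (fold_a_le L (stepSt k st t))
    · exact ih hmem (stepSt k st x)

lemma step_c_low (st : ℤ × ℤ × Option ℤ) (t : Fin k) :
    ∃ v, (stepSt k st t).2.2 = some v ∧ st.1 + (-(t : ℤ) - 1) ≤ v := by
  have hstep : (stepSt k st t).2.2 = some (match st.2.2 with
      | none => st.1 + (-(t : ℤ) - 1)
      | some v => max v (st.1 + (-(t : ℤ) - 1))) := rfl
  cases hcc : st.2.2 with
  | none =>
    rw [hcc] at hstep
    exact ⟨st.1 + (-(t : ℤ) - 1), hstep, le_rfl⟩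
  | some w =>
    rw [hcc] at hstep
    exact ⟨max w (st.1 + (-(t : ℤ) - 1)), hstep, le_max_right _ _⟩

lemma fold_c_low (L : List (Fin k)) : ∀ (st : ℤ × ℤ × Option ℤ) (B : ℤ) (v : ℤ),
    st.2.2 = some v → B ≤ v →
    ∃ v', (L.foldl (stepSt k) st).2.2 = some v' ∧ B ≤ v' := by
  induction L with
  | nil => exact fun st B v hv hB => ⟨v, hv, hB⟩
  | cons t L ih =>
    intro st B v hv hB
    have hstep : (stepSt k st t).2.2 = some (match st.2.2 with
        | none => st.1 + (-(t : ℤ) - 1)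
        | some w => max w (st.1 + (-(t : ℤ) - 1))) := rfl
    rw [hv] at hstep
    exact ih (stepSt k st t) B _ hstep (le_trans hB (le_max_left _ _))

/-- The state along the identity-ordered product after factors `0,…,c0`. -/
def idSt (k c0 : ℕ) : ℤ × ℤ × Option ℤ :=
  ((c0 : ℤ) - k, -1, if c0 = 0 then none else some (-(k : ℤ) - 2))

lemma step_idSt (c0 : ℕ) (t : Fin k) (ht : (t : ℕ) = c0 + 1) :
    stepSt k (idSt k c0) t = idSt k (c0 + 1) := by
  have htz : (t : ℤ) = (c0 : ℤ) + 1 := by exact_mod_cast congrArg (Nat.cast : ℕ → ℤ) ht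
  rw [stepSt, idSt, idSt]
  have e1 : max ((c0 : ℤ) - k) ((t : ℤ) - k) = ((c0 + 1 : ℕ) : ℤ) - k := by
    rw [htz, max_eq_right (by omega)]
    push_cast
    ring
  have e2 : max (-1 : ℤ) (-(t : ℤ) - 1) = -1 := max_eq_left (by omega)
  rw [e1, e2]
  rcases Nat.eq_zero_or_pos c0 with rfl | hc0
  · simp only [if_pos rfl, if_neg (by omega : ¬ (0 + 1 = 0))]
    show (_, _, some ((0 : ℤ) - k + (-(t : ℤ) - 1))) = _
    rw [htz]
    norm_num
    ring
  · rw [if_neg (by omega), if_neg (by omega)]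
    show (_, _, some (max (-(k : ℤ) - 2) ((c0 : ℤ) - k + (-(t : ℤ) - 1)))) = _
    rw [htz, max_eq_left (by omega)]

lemma id_fold (j : ℕ) : ∀ (c0 : ℕ) (f : Fin j → Fin k),
    (∀ i : Fin j, (f i : ℕ) = c0 + 1 + i) →
    (List.ofFn f).foldl (stepSt k) (idSt k c0) = idSt k (c0 + j) := by
  induction j with
  | zero => intro c0 f _; simp
  | succ j ih =>
    intro c0 f hf
    rw [List.ofFn_succ, List.foldl_cons, step_idSt c0 (f 0) (by simpa using hf 0)]
    rw [ih (c0 + 1) (fun i => f i.succ) (fun i => by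
      have := hf i.succ
      simp [Fin.val_succ] at this ⊢
      omega)]
    congr 1
    omega

end Stmt7Big

namespace Stmt7Big

lemma foldl_conv (m K j : ℕ) (g : Fin j → Fin K) (t0 : Fin K) :
    (List.ofFn fun i => MU m K (g i)).foldl (· * ·) (MU m K t0) =
      (List.ofFn g).foldl (mulM m K) (MU m K t0) := by
  rw [show (List.ofFn fun i => MU m K (g i)) = (List.ofFn g).map (MU m K) by
    rw [List.map_ofFn]; rfl, List.foldl_map]
  rfl

lemma perm_inversion {K : ℕ} (σ : Equiv.Perm (Fin K)) (hne : σ ≠ Equiv.refl (Fin K)) :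
    ∃ p q : Fin K, (p : ℕ) < (q : ℕ) ∧ (σ q : ℕ) < (σ p : ℕ) := by
  by_contra hno
  push_neg at hno
  have hm : StrictMono σ := by
    intro a b hab
    have h1 := hno a b (by rwa [Fin.lt_def] at hab)
    have h2 : (σ a : ℕ) ≠ (σ b : ℕ) := fun hh =>
      (σ.injective.ne (ne_of_lt hab)) (Fin.ext hh)
    rw [Fin.lt_def]
    omega
  haveI hwf : WellFoundedLT (Fin K) := inferInstance
  have h := @StrictMono.range_inj (Fin K) (Fin K) _ _ hwf (fun x => σ x) id hm strictMono_id
  have hid : (fun x => σ x) = (id : Fin K → Fin K) :=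
    h.1 (by rw [Set.range_id]; exact σ.surjective.range_eq)
  exact hne (Equiv.ext fun x => congrFun hid x)

lemma not_sp (m : ℕ) : ¬ StronglyPermutable (UMat NegNMax (m+3)) := by
  rintro ⟨k, hk2, hperm⟩
  obtain ⟨k', rfl⟩ : ∃ k', k = k' + 2 := ⟨k - 2, by omega⟩
  set K := k' + 2 with hK
  obtain ⟨σ, hσne, hσeq⟩ := hperm (fun t => MU m K t)
  -- identity-side product
  have hid : finProd (fun t : Fin K => MU m K t) =
      some ((List.ofFn fun i : Fin (k'+1) => (i.succ : Fin K)).foldl (mulM m K)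
        (MU m K 0)) := by
    rw [finProd_succ (fun t : Fin K => MU m K t)]
    rw [foldl_conv m K (k'+1) (fun i : Fin (k'+1) => (i.succ : Fin K)) 0]
  -- sigma-side product
  have hsg : finProd (fun i : Fin K => MU m K (σ i)) =
      some ((List.ofFn fun i : Fin (k'+1) => σ i.succ).foldl (mulM m K)
        (MU m K (σ 0))) := by
    rw [finProd_succ (fun i : Fin K => MU m K (σ i))]
    rw [foldl_conv m K (k'+1) (fun i : Fin (k'+1) => σ i.succ) (σ 0)]
  -- identity-side state
  have hidstate : (List.ofFn fun i : Fin (k'+1) => (i.succ : Fin K)).foldl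
      (stepSt K) (((0 : Fin K) : ℤ) - K, -((0 : Fin K) : ℤ) - 1, none) =
      idSt K (k'+1) := by
    have h0 : (((0 : Fin K) : ℤ) - K, -((0 : Fin K) : ℤ) - 1,
        (none : Option ℤ)) = idSt K 0 := by
      rw [idSt, if_pos rfl]
      norm_num
    rw [h0, id_fold (k'+1) 0 _ (fun i => by simp [Fin.val_succ]; omega)]
    norm_num
  have hidrep := fold_rep (m := m)
    (List.ofFn fun i : Fin (k'+1) => (i.succ : Fin K)) (MU m K 0) _
    (rep_MU (0 : Fin K)) (good_MU (0 : Fin K))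
  rw [hidstate] at hidrep
  -- sigma-side state
  set Lσ := List.ofFn (fun i : Fin (k'+1) => σ i.succ) with hLσ
  set st0 := (((σ 0 : Fin K) : ℤ) - K, -((σ 0 : Fin K) : ℤ) - 1,
    (none : Option ℤ)) with hst0
  have hsgrep := fold_rep (m := m) Lσ (MU m K (σ 0)) st0
    (rep_MU (σ 0)) (good_MU (σ 0))
  -- get the inversion
  obtain ⟨p, q, hpq, hqp⟩ := perm_inversion σ hσne
  have hq1 : 1 ≤ (q : ℕ) := by omega
  have hqK : (q : ℕ) < K := q.isLt
  have hLlen : Lσ.length = k' + 1 := by rw [hLσ, List.length_ofFn]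
  set Q : ℕ := (q : ℕ) - 1 with hQ
  have hQlen : Q < Lσ.length := by omega
  -- split the fold
  have hdecomp : Lσ = Lσ.take Q ++ σ q :: Lσ.drop (Q+1) := by
    conv_lhs => rw [← List.take_append_drop Q Lσ]
    rw [List.drop_eq_getElem_cons hQlen]
    congr 2
    simp only [hLσ, List.getElem_ofFn]
    congr 1
    apply Fin.ext
    simp only [Fin.val_succ]
    omega
  have hsplit : Lσ.foldl (stepSt K) st0 =
      (Lσ.drop (Q+1)).foldl (stepSt K)
        (stepSt K ((Lσ.take Q).foldl (stepSt K) st0) (σ q)) := by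
    conv_lhs => rw [hdecomp]
    rw [List.foldl_append, List.foldl_cons]
  -- lower bound on the a-component of the prefix state
  have ha1 : ((σ p : Fin K) : ℤ) - K ≤ ((Lσ.take Q).foldl (stepSt K) st0).1 := by
    rcases Nat.eq_zero_or_pos (p : ℕ) with hp0 | hp1
    · have hp : p = 0 := Fin.ext hp0
      subst hp
      have := fold_a_le (Lσ.take Q) st0
      rw [hst0] at this ⊢
      exact this
    · have hmem : σ p ∈ Lσ.take Q := by
        have hplen : (p : ℕ) - 1 < (Lσ.take Q).length := by
          rw [List.length_take]
          omega
        have : (Lσ.take Q)[(p : ℕ) - 1] = σ p := by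
          simp only [List.getElem_take, hLσ, List.getElem_ofFn]
          congr 1
          apply Fin.ext
          simp only [Fin.val_succ]
          omega
        rw [← this]
        exact List.getElem_mem hplen
      exact fold_a_mem (Lσ.take Q) (σ p) hmem st0
  -- lower bound on the c-component after the inversion step
  have hb2 := step_c_low ((Lσ.take Q).foldl (stepSt K) st0) (σ q)
  obtain ⟨v2, hv2, hv2le⟩ := hb2
  have hv2K : -(K : ℤ) ≤ v2 := by
    have : ((σ q : Fin K) : ℤ) + 1 ≤ ((σ p : Fin K) : ℤ) := by exact_mod_cast hqp
    omega
  obtain ⟨vf, hvf, hvfK⟩ := fold_c_low (Lσ.drop (Q+1)) _ (-(K : ℤ)) v2 hv2 hv2K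
  -- combine
  rw [hsg, hid] at hσeq
  have hPeq := Option.some.inj hσeq
  have h02σ := (hsgrep.1).2.2.2
  have h02id := (hidrep.1).2.2.2
  have hgσ := (hsgrep.2).2.2
  rw [hsplit, hvf] at h02σ hgσ
  have hvfneg : vf < 0 := hgσ vf rfl
  rw [hPeq, h02id] at h02σ
  -- h02σ : cE (idSt K (k'+1)).2.2 = cE (some vf)
  have hcid : (idSt K (k'+1)).2.2 = some (-(K : ℤ) - 2) := by
    rw [idSt, if_neg (by omega)]
  rw [hcid] at h02σ
  have : (-(K : ℤ) - 2) = vf := eZ_inj (by omega) hvfneg h02σ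
  omega

end Stmt7Big
/-- the monoid `U_n((-ℕ)_max)` of unitriangular tropical matrices with
above-diagonal entries in `(-ℕ) ∪ {-∞}` is strongly permutable iff `n ≤ 2`; in
particular `U_3((-ℕ)_max)` is not strongly permutable. -/
theorem stmt_7 :
    (∀ n : ℕ, 0 < n → (StronglyPermutable (UMat NegNMax n) ↔ n ≤ 2)) ∧
    ¬ StronglyPermutable (UMat NegNMax 3) := by
  constructor
  · intro n hn
    constructor
    · intro hsp
      by_contra hle
      push_neg at hle
      obtain ⟨m, rfl⟩ : ∃ m, n = m + 3 := ⟨n - 3, by omega⟩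
      exact Stmt7Big.not_sp m hsp
    · intro h2
      interval_cases n
      · exact sp_one
      · exact sp_two
  · exact Stmt7Big.not_sp 0
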